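/- arXiv:math/0410389 — 3 statements merged into one kernel-verified Lean document; each statement's English description precedes it below -/
import Mathlib

section
/- Let 0 < p < 1 and let a, c, z be complex numbers with z ≠ 0 and c ≠ p^{−k} for every natural number k. Define f(w) = ₁φ₁(a;c;p,w). Then (c − a·z)·f(p·z) + (z − c − p)·f(z) + p·f(z/p) = 0. -/
open scoped BigOperators

/-- The q-shifted factorial `(a;p)_n = ∏_{i=0}^{n-1} (1 - a p^i)`. -/
noncomputable def qPoch (a p : ℂ) (n : ℕ) : ℂ :=
  ∏ i ∈ Finset.range n, (1 - a * p ^ i)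

/-- The basic hypergeometric series
`₁φ₁(a;c;p,z) = ∑_{j=0}^∞ ((a;p)_j / ((p;p)_j (c;p)_j)) (-1)^j p^(j(j-1)/2) z^j`. -/
noncomputable def phi11 (a c p z : ℂ) : ℂ :=
  ∑' j : ℕ, qPoch a p j / (qPoch p p j * qPoch c p j) * (-1) ^ j *
    p ^ (j * (j - 1) / 2) * z ^ j

/-!
Write `f(z) = ∑ t_j z^j`. The coefficients satisfy
`t_{j+1} (1 - p^{j+1}) (1 - c p^j) = -t_j (1 - a p^j) p^j`, so `t_{j+1} / t_j → 0` and the series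
converges for every `z`. Expanding the left-hand side termwise gives `∑ u_j + ∑ v_j`, where
`u_j = t_j z^j (c p^j - c - p + p^{1-j})` collects the terms not multiplied by `z` and
`v_j = t_j (1 - a p^j) z^{j+1}` the others. The coefficient recursion says exactly
`u_{j+1} = -v_j`, and `u_0 = 0`, so the two sums cancel.
-/

open Filter Topology

theorem summable_of_succ_eq_mul_of_tendsto_zero {𝕜 : Type*} [NormedField 𝕜]
    [CompleteSpace 𝕜] {f r : ℕ → 𝕜} (hf : ∀ n, f (n + 1) = f n * r n)
    (hr : Tendsto r atTop (𝓝 0)) :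
    Summable f := by
  refine summable_of_ratio_norm_eventually_le (r := 1 / 2) (by norm_num) ?_
  filter_upwards [(tendsto_norm_zero.comp hr).eventually_lt_const (by norm_num : (0 : ℝ) < 1 / 2)]
    with n hn
  rw [hf, norm_mul, mul_comm]
  exact mul_le_mul_of_nonneg_right hn.le (norm_nonneg _)

theorem qPoch_succ (a p : ℂ) (n : ℕ) : qPoch a p (n + 1) = qPoch a p n * (1 - a * p ^ n) :=
  Finset.prod_range_succ _ n

theorem qPoch_ne_zero {a p : ℂ} (h : ∀ i, a * p ^ i ≠ 1) (n : ℕ) : qPoch a p n ≠ 0 :=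
  Finset.prod_ne_zero_iff.2 fun i _ => sub_ne_zero.2 (h i).symm

noncomputable def phi11Coeff (a c p : ℂ) (j : ℕ) : ℂ :=
  qPoch a p j / (qPoch p p j * qPoch c p j) * (-1) ^ j * p ^ (j * (j - 1) / 2)

theorem phi11_eq_tsum (a c p z : ℂ) : phi11 a c p z = ∑' j, phi11Coeff a c p j * z ^ j := rfl

section Coefficients

variable {a c p : ℂ} (hp : ∀ i, p * p ^ i ≠ 1) (hc : ∀ i, c * p ^ i ≠ 1)
include hp hc

theorem phi11Coeff_succ (j : ℕ) :
    phi11Coeff a c p (j + 1) =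
      phi11Coeff a c p j * (-((1 - a * p ^ j) * p ^ j) / ((1 - p * p ^ j) * (1 - c * p ^ j))) := by
  have hpj := sub_ne_zero.2 (hp j).symm
  have hcj := sub_ne_zero.2 (hc j).symm
  have := qPoch_ne_zero hp j
  have := qPoch_ne_zero hc j
  simp only [phi11Coeff, qPoch_succ, Nat.triangle_succ, pow_add]
  field_simp

theorem summable_phi11Coeff_mul_pow (hp1 : ‖p‖ < 1) (w : ℂ) :
    Summable fun j => phi11Coeff a c p j * w ^ j := by
  refine summable_of_succ_eq_mul_of_tendsto_zero (r := fun j =>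
    -((1 - a * p ^ j) * p ^ j) / ((1 - p * p ^ j) * (1 - c * p ^ j)) * w) (fun j => ?_) ?_
  · rw [phi11Coeff_succ hp hc, pow_succ]
    ring
  · have hcont : ContinuousAt
        (fun x : ℂ => -((1 - a * x) * x) / ((1 - p * x) * (1 - c * x)) * w) 0 :=
      ((ContinuousAt.div (by fun_prop) (by fun_prop) (by simp))).mul continuousAt_const
    simpa [Function.comp_def] using
      hcont.tendsto.comp (tendsto_pow_atTop_nhds_zero_of_norm_lt_one hp1)

theorem phi11Coeff_succ_mul (hp0 : p ≠ 0) (j : ℕ) :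
    phi11Coeff a c p (j + 1) * (c * p ^ (j + 1) - c - p + p / p ^ (j + 1)) =
      -(phi11Coeff a c p j * (1 - a * p ^ j)) := by
  have hpj := sub_ne_zero.2 (hp j).symm
  have hcj := sub_ne_zero.2 (hc j).symm
  have := pow_ne_zero j hp0
  have key :
      c * p ^ (j + 1) - c - p + p / p ^ (j + 1) = (1 - p * p ^ j) * (1 - c * p ^ j) / p ^ j := by
    field_simp
    ring
  rw [key, phi11Coeff_succ hp hc, mul_assoc, div_mul_div_cancel₀ (mul_ne_zero hpj hcj)]
  field_simp

end Coefficients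

theorem phi11_three_term_recurrence {a c p : ℂ} (hp0 : p ≠ 0) (hp1 : ‖p‖ < 1)
    (hc : ∀ k, c * p ^ k ≠ 1) (z : ℂ) :
    (c - a * z) * phi11 a c p (p * z) + (z - c - p) * phi11 a c p z +
      p * phi11 a c p (z / p) = 0 := by
  have hp (i : ℕ) : p * p ^ i ≠ 1 := by
    rw [← pow_succ']
    exact ne_of_apply_ne norm (by simpa using (pow_lt_one₀ (norm_nonneg _) hp1 i.succ_ne_zero).ne)
  set t := phi11Coeff a c p
  have hasSum_phi11 (w : ℂ) : HasSum (fun j => t j * w ^ j) (phi11 a c p w) := by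
    rw [phi11_eq_tsum]
    exact (summable_phi11Coeff_mul_pow hp hc hp1 w).hasSum
  set u : ℕ → ℂ := fun j =>
    c * (t j * (p * z) ^ j) - (c + p) * (t j * z ^ j) + p * (t j * (z / p) ^ j)
  set v : ℕ → ℂ := fun j => z * (t j * z ^ j) - a * z * (t j * (p * z) ^ j)
  set U := c * phi11 a c p (p * z) - (c + p) * phi11 a c p z + p * phi11 a c p (z / p)
  have hu : HasSum u U :=
    (((hasSum_phi11 _).mul_left c).sub ((hasSum_phi11 z).mul_left _)).add
      ((hasSum_phi11 _).mul_left p)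
  have hv : HasSum v (z * phi11 a c p z - a * z * phi11 a c p (p * z)) :=
    ((hasSum_phi11 z).mul_left z).sub ((hasSum_phi11 _).mul_left _)
  have hu_succ (j : ℕ) : u (j + 1) = -v j := by
    simp only [u, v, mul_pow, div_pow]
    linear_combination z ^ (j + 1) * phi11Coeff_succ_mul (a := a) hp hc hp0 j
  have hu_shift : HasSum (fun j => u (j + 1)) U := by
    have hu0 : u 0 = 0 := by simp only [u]; ring
    simpa [hu0] using (hasSum_nat_add_iff' 1).2 hu
  have hv' : HasSum v (-U) := by
    simpa [hu_succ] using hu_shift.neg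
  linear_combination hv.unique hv'

theorem phi11_recursion_general (p : ℝ) (hp0 : 0 < p) (hp1 : p < 1) (a c z : ℂ)
    (hc : ∀ k : ℕ, c ≠ (p : ℂ) ^ (-(k : ℤ))) :
    (c - a * z) * phi11 a c p ((p : ℂ) * z) + (z - c - (p : ℂ)) * phi11 a c p z +
      (p : ℂ) * phi11 a c p (z / (p : ℂ)) = 0 := by
  have hp0' : (p : ℂ) ≠ 0 := Complex.ofReal_ne_zero.2 hp0.ne'
  have hp1' : ‖(p : ℂ)‖ < 1 := by rwa [Complex.norm_real, Real.norm_of_nonneg hp0.le]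
  have hc' (k : ℕ) : c * (p : ℂ) ^ k ≠ 1 := fun h =>
    hc k (by rw [zpow_neg, zpow_natCast, eq_inv_of_mul_eq_one_left h])
  exact phi11_three_term_recurrence hp0' hp1' hc' z

/-- The function `f(w) = ₁φ₁(a;c;p,w)` satisfies the three-term recursion
`(c - a z) f(p z) + (z - c - p) f(z) + p f(z/p) = 0`. -/
theorem phi11_recursion (p : ℝ) (hp0 : 0 < p) (hp1 : p < 1) (a c z : ℂ)
    (hz : z ≠ 0) (hc : ∀ k : ℕ, c ≠ (p : ℂ) ^ (-(k : ℤ))) :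
    (c - a * z) * phi11 a c p ((p : ℂ) * z) + (z - c - (p : ℂ)) * phi11 a c p z +
      (p : ℂ) * phi11 a c p (z / (p : ℂ)) = 0 :=
  phi11_recursion_general p hp0 hp1 a c z hc
end

section
/- Let q > 1 be real, λ = q − q^{−1}, let α, β be nonzero complex numbers with α/β = q^{−γ} for a real γ, and let ψ₀(x) = e_q(−i q^{−γ} λ q^{−1/2} x). Then ψ₀ is well defined and nonzero at every real x, and for every real x ≠ 0 one has (a ψ₀)(x) = α q ψ₀(q² x) − i β q^{1/2} (D_q ψ₀)(q x) = 0; i.e. ψ₀ is annihilated by the lowering operator a = α U^{−2} + β U^{−1} P of the q-oscillator realized on the quantum line. -/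
open scoped BigOperators

/-- The infinite q-shifted factorial `(a;p)_∞ = ∏_{i=0}^∞ (1 - a p^i)`. -/
noncomputable def qPochInf (a p : ℂ) : ℂ :=
  ∏' i : ℕ, (1 - a * p ^ i)

/-- The q-exponential `e_q(z) = 1/(z;q^{-2})_∞`. -/
noncomputable def qExp (q : ℝ) (z : ℂ) : ℂ :=
  (qPochInf z ((q : ℂ) ^ (-2 : ℤ)))⁻¹

/-- The q-derivative `(D_q f)(x) = (f(qx) - f(q⁻¹x)) / (x(q - q⁻¹))`. -/
noncomputable def Dq (q : ℝ) (f : ℝ → ℂ) (x : ℝ) : ℂ :=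
  (f (q * x) - f (q⁻¹ * x)) / ((x : ℂ) * ((q : ℂ) - (q : ℂ)⁻¹))

/-- The ground state wave function `ψ₀(x) = e_q(-i q^{-γ} λ q^{-1/2} x)`,
where `λ = q - q⁻¹`. -/
noncomputable def psi0 (q γ : ℝ) (x : ℝ) : ℂ :=
  qExp q (-Complex.I * ((q ^ (-γ) * (q - q⁻¹) * q ^ (-(1 : ℝ) / 2) : ℝ) : ℂ) * (x : ℂ))

open Complex

/-!
Since `(z;p)_∞ = (1 - z)(zp;p)_∞`, the q-exponential satisfies `e_q(q²z) = e_q(z)/(1 - q²z)`, so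
`(D_q e_q(w·))(qx) = (e_q(wq²x) - e_q(wx))/(qxλ) = (qw/λ) e_q(wq²x)`. For `w = -i q^{-γ} λ q^{-1/2}`
this is `-i q^{-γ} q^{1/2} ψ₀(q²x)`, and the two terms of `(aψ₀)(x)` cancel because
`α = β q^{-γ}`. Since `w` is purely imaginary and `q^{-2}` is real, every factor `1 - wx q^{-2n}`
has real part `1`, and the product converges absolutely, so it does not vanish.
-/

lemma one_sub_ne_zero_of_re_eq_zero {z : ℂ} (hz : z.re = 0) : 1 - z ≠ 0 := by
  intro h
  simpa [hz] using congrArg Complex.re h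

section QPochhammer

variable {a p : ℂ}

lemma summable_norm_mul_pow (hp : ‖p‖ < 1) : Summable fun i : ℕ => ‖a * p ^ i‖ := by
  simpa [norm_mul, norm_pow] using (summable_geometric_of_lt_one (norm_nonneg p) hp).mul_left ‖a‖

lemma multipliable_one_sub_mul_pow (hp : ‖p‖ < 1) : Multipliable fun i : ℕ => 1 - a * p ^ i := by
  simpa [sub_eq_add_neg] using multipliable_one_add_of_summable (f := fun i : ℕ => -(a * p ^ i))
    (by simpa using summable_norm_mul_pow hp)

lemma qPochInf_ne_zero (hp : ‖p‖ < 1) (ha : ∀ i : ℕ, 1 - a * p ^ i ≠ 0) : qPochInf a p ≠ 0 := by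
  simpa [qPochInf, sub_eq_add_neg] using
    tprod_one_add_ne_zero_of_summable (f := fun i : ℕ => -(a * p ^ i))
      (by simpa [sub_eq_add_neg] using ha) (by simpa using summable_norm_mul_pow hp)

lemma qPochInf_ne_zero_of_re_eq_zero {p : ℝ} (hp : |p| < 1) (ha : a.re = 0) :
    qPochInf a p ≠ 0 :=
  qPochInf_ne_zero (by simpa using hp) fun i =>
    one_sub_ne_zero_of_re_eq_zero (by simp [← ofReal_pow, ha])

lemma qPochInf_eq_one_sub_mul (hp : ‖p‖ < 1) : qPochInf a p = (1 - a) * qPochInf (a * p) p := by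
  rw [qPochInf, tprod_eq_zero_mul' ?_, pow_zero, mul_one, qPochInf]
  · simp only [pow_succ', mul_assoc]
  · simpa only [pow_succ', mul_assoc] using multipliable_one_sub_mul_pow (a := a * p) hp

end QPochhammer

section QExp

variable {q : ℝ}

lemma abs_zpow_neg_two_lt_one (hq : 1 < |q|) : |q ^ (-2 : ℤ)| < 1 := by
  rw [abs_zpow, zpow_neg]
  exact inv_lt_one_of_one_lt₀ (one_lt_zpow₀ hq (by norm_num))

lemma qExp_sq_mul (hq : 1 < |q|) (z : ℂ) :
    qExp q ((q : ℂ) ^ 2 * z) = (1 - (q : ℂ) ^ 2 * z)⁻¹ * qExp q z := by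
  have hp : ‖(q : ℂ) ^ (-2 : ℤ)‖ < 1 := by
    simpa [← ofReal_zpow] using abs_zpow_neg_two_lt_one hq
  have hq0 : (q : ℂ) ≠ 0 := ofReal_ne_zero.mpr (by rintro rfl; norm_num at hq)
  rw [qExp, qExp, qPochInf_eq_one_sub_mul hp, mul_inv]
  congr 3
  field_simp

lemma Dq_qExp_const_mul (hq : 1 < |q|) (w : ℂ) {x : ℝ} (hx : x ≠ 0)
    (hw : 1 - w * ((q ^ 2 * x : ℝ) : ℂ) ≠ 0) :
    Dq q (fun x : ℝ => qExp q (w * x)) (q * x) =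
      q * w / (q - q⁻¹) * qExp q (w * ((q ^ 2 * x : ℝ) : ℂ)) := by
  have hq0 : q ≠ 0 := by rintro rfl; norm_num at hq
  have hq2 : (q : ℂ) ^ 2 - 1 ≠ 0 := by
    exact_mod_cast ((one_lt_sq_iff_one_lt_abs q).mpr hq).ne' |> sub_ne_zero.mpr
  have hshift : qExp q (w * x) =
      (1 - w * ((q ^ 2 * x : ℝ) : ℂ)) * qExp q (w * ((q ^ 2 * x : ℝ) : ℂ)) := by
    have := qExp_sq_mul hq (w * x)
    push_cast at hw ⊢
    rw [mul_left_comm w, this, mul_inv_cancel_left₀ (by rwa [mul_left_comm])]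
  simp only [Dq]
  rw [show q * (q * x) = q ^ 2 * x by ring, show q⁻¹ * (q * x) = x by field_simp, hshift]
  have hx0 : (x : ℂ) ≠ 0 := ofReal_ne_zero.mpr hx
  have hq0' : (q : ℂ) ≠ 0 := ofReal_ne_zero.mpr hq0
  push_cast
  field_simp
  ring

end QExp

theorem psi0_ground_state_general (q γ : ℝ) (hq : 1 < q) (α β : ℂ) (hβ : β ≠ 0)
    (hαβ : α / β = ((q ^ (-γ) : ℝ) : ℂ)) :
    (∀ x : ℝ,
      qPochInf (-Complex.I * ((q ^ (-γ) * (q - q⁻¹) * q ^ (-(1 : ℝ) / 2) : ℝ) : ℂ) * (x : ℂ))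
          ((q : ℂ) ^ (-2 : ℤ)) ≠ 0 ∧ psi0 q γ x ≠ 0) ∧
    (∀ x : ℝ, x ≠ 0 →
      α * (q : ℂ) * psi0 q γ (q ^ 2 * x) -
        Complex.I * β * ((q ^ ((1 : ℝ) / 2) : ℝ) : ℂ) * Dq q (psi0 q γ) (q * x) = 0) := by
  have hq' : 1 < |q| := hq.trans_le (le_abs_self q)
  set w : ℂ := -I * ((q ^ (-γ) * (q - q⁻¹) * q ^ (-(1 : ℝ) / 2) : ℝ) : ℂ)
  have hre : ∀ x : ℝ, (w * x).re = 0 := fun x => by simp [w]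
  have hpoch : ∀ x : ℝ, qPochInf (w * x) ((q : ℂ) ^ (-2 : ℤ)) ≠ 0 := fun x => by
    simpa [← ofReal_zpow] using
      qPochInf_ne_zero_of_re_eq_zero (abs_zpow_neg_two_lt_one hq') (hre x)
  refine ⟨fun x => ⟨hpoch x, inv_ne_zero (hpoch x)⟩, fun x hx => ?_⟩
  rw [show psi0 q γ = fun x : ℝ => qExp q (w * x) from rfl,
    Dq_qExp_const_mul hq' w hx (one_sub_ne_zero_of_re_eq_zero (hre _))]
  have hα' : α = β * ((q ^ (-γ) : ℝ) : ℂ) := by rw [← hαβ, mul_div_cancel₀ _ hβ]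
  have hhalf : ((q ^ ((1 : ℝ) / 2) : ℝ) : ℂ) * ((q ^ (-(1 : ℝ) / 2) : ℝ) : ℂ) = 1 := by
    rw [← ofReal_mul, ← Real.rpow_add (by linarith)]; norm_num
  have hlam : (q : ℂ) - (q : ℂ)⁻¹ ≠ 0 := by
    exact_mod_cast sub_ne_zero.mpr ((inv_lt_one_of_one_lt₀ hq).trans hq).ne'
  -- `i · (-i) · q^{1/2} q^{-1/2} = 1` and `α = β q^{-γ}` make the two terms cancel.
  simp only [w, ofReal_mul, ofReal_sub, ofReal_inv, hα']
  generalize qExp q _ = E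
  generalize ((q ^ ((1 : ℝ) / 2) : ℝ) : ℂ) = s, ((q ^ (-(1 : ℝ) / 2) : ℝ) : ℂ) = t at hhalf ⊢
  generalize ((q ^ (-γ) : ℝ) : ℂ) = g, (q : ℂ) - (q : ℂ)⁻¹ = l at hlam ⊢
  field_simp
  linear_combination (β * g * q * E * s * t) * I_sq - (β * g * q * E) * hhalf

/-- The ground state `ψ₀` is well defined (its defining infinite product is nonzero)
and nonzero at every real `x`, and it is annihilated by the lowering operator
`a = α U⁻² + β U⁻¹ P`, i.e. `(a ψ₀)(x) = α q ψ₀(q²x) - i β q^{1/2} (D_q ψ₀)(qx) = 0`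
for every real `x ≠ 0`, whenever `α/β = q^{-γ}`. -/
theorem psi0_ground_state (q γ : ℝ) (hq : 1 < q) (α β : ℂ) (hα : α ≠ 0) (hβ : β ≠ 0)
    (hαβ : α / β = ((q ^ (-γ) : ℝ) : ℂ)) :
    (∀ x : ℝ,
      qPochInf (-Complex.I * ((q ^ (-γ) * (q - q⁻¹) * q ^ (-(1 : ℝ) / 2) : ℝ) : ℂ) * (x : ℂ))
          ((q : ℂ) ^ (-2 : ℤ)) ≠ 0 ∧ psi0 q γ x ≠ 0) ∧
    (∀ x : ℝ, x ≠ 0 →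
      α * (q : ℂ) * psi0 q γ (q ^ 2 * x) -
        Complex.I * β * ((q ^ ((1 : ℝ) / 2) : ℝ) : ℂ) * Dq q (psi0 q γ) (q * x) = 0) :=
  psi0_ground_state_general q γ hq α β hβ hαβ
end

section
/- Let q > 1 be real, λ = q − q^{−1}, γ ∈ ℝ, and let α ∈ ℂ with |α|² = q/λ and β = α q^{γ}. Let ε ∈ ℂ and E = (1 + ε)/(1 − q^{−2}). Let ψ₀(x) = e_q(−i q^{−γ} λ q^{−1/2} x) and f(x) = ψ₀(x) g(x) for a complex-valued function g. Then for every real x ≠ 0, f satisfies the difference equation E λ² x² f(x) = f(x)·(|α|² λ² x² + |β|² (q + q^{−1})) + f(q² x)·(−q^{−1} |β|² − i α β̄ q^{1/2} x λ) + f(q^{−2} x)·(−q |β|² + i α β̄ q^{1/2} x λ) at x if and only if g satisfies the reduced eigenvalue equation 0 = g(x)·(q + q^{−1} − ε q^{−2γ} λ² x²) − q^{−1} g(q² x) − q g(q^{−2} x)·(1 + q^{−2γ−1} λ² x²) at x. -/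
open scoped BigOperators

lemma one_sub_I_mul_ne (t : ℝ) : (1:ℂ) - Complex.I * t ≠ 0 := by
  intro h
  have := congrArg Complex.re h
  simp at this

lemma one_add_I_mul_ne (t : ℝ) : (1:ℂ) + Complex.I * t ≠ 0 := by
  have := one_sub_I_mul_ne (-t)
  push_cast at this
  convert this using 1; ring

lemma factor_ne (t pr : ℝ) (n : ℕ) :
    (1 : ℂ) - Complex.I * (t:ℝ) * ((pr:ℝ):ℂ)^n ≠ 0 := by
  have h : Complex.I * (t:ℝ) * ((pr:ℝ):ℂ)^n = Complex.I * ((t * pr^n : ℝ):ℂ) := by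
    push_cast; ring
  rw [h]
  exact one_sub_I_mul_ne (t * pr^n)

lemma qPoch_log_summable (t pr : ℝ) (h1 : |pr| < 1) :
    Summable (fun n : ℕ => Complex.log (1 - Complex.I * (t:ℝ) * ((pr:ℝ):ℂ)^n)) := by
  have hgeo : Summable (fun n : ℕ => (3/2) * (|t| * |pr|^n)) :=
    ((summable_geometric_of_lt_one (abs_nonneg pr) h1).mul_left |t|).mul_left (3/2)
  refine Summable.of_norm (Summable.of_norm_bounded_eventually_nat hgeo ?_)
  have htend : Filter.Tendsto (fun n : ℕ => |t| * |pr|^n) Filter.atTop (nhds 0) := by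
    simpa using (tendsto_pow_atTop_nhds_zero_of_lt_one (abs_nonneg pr) h1).const_mul |t|
  filter_upwards [htend.eventually_le_const (by norm_num : (0:ℝ) < 1/2)] with n hn
  have hnorm : ‖-(Complex.I * (t:ℝ) * ((pr:ℝ):ℂ)^n)‖ = |t| * |pr|^n := by
    simp [norm_mul, norm_pow, Complex.norm_real, abs_mul]
  have hle : ‖-(Complex.I * (t:ℝ) * ((pr:ℝ):ℂ)^n)‖ ≤ 1/2 := by rw [hnorm]; exact hn
  have h2 := Complex.norm_log_one_add_half_le_self hle
  rw [hnorm] at h2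
  simpa [sub_eq_add_neg] using h2

lemma qPoch_mult (t pr : ℝ) (h1 : |pr| < 1) :
    Multipliable (fun n : ℕ => 1 - Complex.I * (t:ℝ) * ((pr:ℝ):ℂ)^n) :=
  Complex.multipliable_of_summable_log (qPoch_log_summable t pr h1)

set_option maxHeartbeats 1000000 in
lemma qPoch_shift (t pr : ℝ) (h1 : |pr| < 1) :
    qPochInf (Complex.I * (t:ℝ)) ((pr:ℝ):ℂ) =
      (1 - Complex.I * (t:ℝ)) * qPochInf (Complex.I * ((t*pr : ℝ):ℝ)) ((pr:ℝ):ℂ) := by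
  unfold qPochInf
  have hm2 : Multipliable (fun n : ℕ =>
      (fun i : ℕ => 1 - (Complex.I * (t:ℝ)) * ((pr:ℝ):ℂ)^i) (n+1)) := by
    refine (qPoch_mult (t*pr) pr h1).congr fun n => ?_
    show 1 - Complex.I * ((t*pr:ℝ):ℂ) * ((pr:ℝ):ℂ)^n = _
    push_cast
    rw [pow_succ]
    ring
  rw [tprod_eq_zero_mul' hm2]
  congr 1
  · simp
  · apply tprod_congr
    intro n
    show _ = 1 - Complex.I * ((t*pr:ℝ):ℂ) * ((pr:ℝ):ℂ)^n
    push_cast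
    rw [pow_succ]
    ring

lemma qPoch_norm_ge (t pr : ℝ) (h1 : |pr| < 1) :
    1 ≤ ‖qPochInf (Complex.I * (t:ℝ)) ((pr:ℝ):ℂ)‖ := by
  have hm := qPoch_mult t pr h1
  have hp := hm.hasProd
  refine ge_of_tendsto' hp.norm (fun s => ?_)
  have key : ∀ n : ℕ, (1:ℝ) ≤ ‖(1:ℂ) - Complex.I * (t:ℝ) * ((pr:ℝ):ℂ)^n‖ := by
    intro n
    have hre : ((1:ℂ) - Complex.I * (t:ℝ) * ((pr:ℝ):ℂ)^n).re = 1 := by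
      simp [← Complex.ofReal_pow, Complex.sub_re, Complex.mul_re]
    calc (1:ℝ) = |((1:ℂ) - Complex.I * (t:ℝ) * ((pr:ℝ):ℂ)^n).re| := by rw [hre]; norm_num
    _ ≤ ‖(1:ℂ) - Complex.I * (t:ℝ) * ((pr:ℝ):ℂ)^n‖ := Complex.abs_re_le_norm _
  have h2 : ∏ b ∈ s, (1:ℝ) ≤ ∏ b ∈ s, ‖(1:ℂ) - Complex.I * (t:ℝ) * ((pr:ℝ):ℂ)^b‖ :=
    Finset.prod_le_prod (fun i _ => by norm_num) (fun i _ => key i)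
  simpa using h2

lemma qPoch_ne (t pr : ℝ) (h1 : |pr| < 1) :
    qPochInf (Complex.I * (t:ℝ)) ((pr:ℝ):ℂ) ≠ 0 := by
  intro h
  have := qPoch_norm_ge t pr h1
  rw [h] at this
  simp at this
  linarith


set_option maxHeartbeats 4000000 in
/-- With the ansatz `f = ψ₀ g`, `E = (1+ε)/(1-q⁻²)`, `β = α q^γ`, `|α|² = q/λ`, the
difference equation
`E λ² x² f(x) = f(x)(|α|² λ² x² + |β|²(q + q⁻¹)) + f(q²x)(-q⁻¹|β|² - iαβ̄ q^{1/2} x λ)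
  + f(q⁻²x)(-q|β|² + iαβ̄ q^{1/2} x λ)`
holds at a point `x ≠ 0` if and only if `g` satisfies the reduced eigenvalue equation
`0 = g(x)(q + q⁻¹ - ε q^{-2γ} λ² x²) - q⁻¹ g(q²x) - q g(q⁻²x)(1 + q^{-2γ-1} λ² x²)`
at `x`, where `λ = q - q⁻¹`. -/
theorem difference_iff_reduced (q γ : ℝ) (hq : 1 < q) (α β : ℂ)
    (hα : ‖α‖ ^ 2 = q / (q - q⁻¹)) (hβ : β = α * ((q ^ γ : ℝ) : ℂ))
    (ε : ℂ) (E : ℂ) (hE : E = (1 + ε) / (1 - (q : ℂ) ^ (-2 : ℤ)))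
    (g : ℝ → ℂ) (f : ℝ → ℂ) (hf : ∀ x : ℝ, f x = psi0 q γ x * g x) :
    ∀ x : ℝ, x ≠ 0 →
      (E * ((q - q⁻¹ : ℝ) : ℂ) ^ 2 * (x : ℂ) ^ 2 * f x =
          f x * ((Complex.normSq α : ℂ) * ((q - q⁻¹ : ℝ) : ℂ) ^ 2 * (x : ℂ) ^ 2 +
              (Complex.normSq β : ℂ) * ((q : ℂ) + (q : ℂ)⁻¹)) +
          f (q ^ 2 * x) * (-(q : ℂ)⁻¹ * (Complex.normSq β : ℂ) -
              Complex.I * α * (starRingEnd ℂ) β * ((q ^ ((1 : ℝ) / 2) : ℝ) : ℂ) *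
                (x : ℂ) * ((q - q⁻¹ : ℝ) : ℂ)) +
          f (q⁻¹ ^ 2 * x) * (-(q : ℂ) * (Complex.normSq β : ℂ) +
              Complex.I * α * (starRingEnd ℂ) β * ((q ^ ((1 : ℝ) / 2) : ℝ) : ℂ) *
                (x : ℂ) * ((q - q⁻¹ : ℝ) : ℂ))
        ↔
        0 = g x * ((q : ℂ) + (q : ℂ)⁻¹ -
              ε * ((q ^ (-2 * γ) : ℝ) : ℂ) * ((q - q⁻¹ : ℝ) : ℂ) ^ 2 * (x : ℂ) ^ 2) -
          (q : ℂ)⁻¹ * g (q ^ 2 * x) -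
          (q : ℂ) * g (q⁻¹ ^ 2 * x) *
            (1 + ((q ^ (-2 * γ - 1) : ℝ) : ℂ) * ((q - q⁻¹ : ℝ) : ℂ) ^ 2 * (x : ℂ) ^ 2)) := by
  have q0 : (0:ℝ) < q := lt_trans zero_lt_one hq
  have hqne : q ≠ 0 := ne_of_gt q0
  have hq2 : (1:ℝ) < q^2 := by nlinarith
  have hpr0 : (0:ℝ) < (q^2)⁻¹ := by positivity
  have hpr : |(q^2)⁻¹| < 1 := by
    rw [abs_of_pos hpr0]
    exact inv_lt_one_of_one_lt₀ hq2
  have hpc : ((q:ℂ))^(-2:ℤ) = (((q^2)⁻¹ : ℝ):ℂ) := by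
    push_cast
    rw [zpow_neg]
    norm_cast
  have hpsi : ∀ y:ℝ, psi0 q γ y =
      (qPochInf (Complex.I * ((-((q ^ (-γ) * (q - q⁻¹) * q ^ (-(1:ℝ)/2)) * y)) : ℝ)) (((q^2)⁻¹ : ℝ):ℂ))⁻¹ := by
    intro y
    unfold psi0 qExp
    rw [hpc]
    congr 2
    push_cast
    ring
  have hqγpos : (0:ℝ) < q ^ γ := Real.rpow_pos_of_pos q0 γ
  have hqhpos : (0:ℝ) < q ^ ((1:ℝ)/2) := Real.rpow_pos_of_pos q0 _
  have hU0 : ((q^γ : ℝ):ℂ) ≠ 0 := by exact_mod_cast ne_of_gt hqγpos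
  have hV0 : ((q^((1:ℝ)/2) : ℝ):ℂ) ≠ 0 := by exact_mod_cast ne_of_gt hqhpos
  have hQc0 : (q:ℂ) ≠ 0 := by exact_mod_cast hqne
  have hQi : (q:ℂ) * (q:ℂ)⁻¹ = 1 := mul_inv_cancel₀ hQc0
  have hLcast : ((q - q⁻¹ : ℝ):ℂ) = (q:ℂ) - (q:ℂ)⁻¹ := by push_cast; ring
  have hLr0 : (0:ℝ) < q - q⁻¹ := by
    have : q⁻¹ < 1 := inv_lt_one_of_one_lt₀ hq
    linarith
  have hCr : (q ^ (-γ) * (q - q⁻¹) * q ^ (-(1:ℝ)/2)) * (q^γ * q^((1:ℝ)/2)) = q - q⁻¹ := by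
    rw [show (-(1:ℝ)/2 : ℝ) = -((1:ℝ)/2) by norm_num]
    rw [Real.rpow_neg (le_of_lt q0), Real.rpow_neg (le_of_lt q0)]
    field_simp
  have hC : ((q ^ (-γ) * (q - q⁻¹) * q ^ (-(1:ℝ)/2) : ℝ):ℂ) * (((q^γ : ℝ):ℂ) * ((q^((1:ℝ)/2) : ℝ):ℂ)) = (q:ℂ) - (q:ℂ)⁻¹ := by
    have h' := congrArg (fun r : ℝ => (r:ℂ)) hCr
    push_cast at h'
    push_cast
    linear_combination h'
  have hV2r : q^((1:ℝ)/2) * q^((1:ℝ)/2) = q := by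
    rw [← Real.rpow_add q0]
    norm_num
  have hV2 : ((q^((1:ℝ)/2) : ℝ):ℂ) * ((q^((1:ℝ)/2) : ℝ):ℂ) = (q:ℂ) := by
    have h' := congrArg (fun r : ℝ => (r:ℂ)) hV2r
    push_cast at h'
    linear_combination h'
  have hA2r : q^(-2*γ) * (q^γ * q^γ) = 1 := by
    rw [← Real.rpow_add q0, ← Real.rpow_add q0]
    rw [show -2*γ + (γ + γ) = (0:ℝ) by ring]
    exact Real.rpow_zero q
  have hA2 : ((q^(-2*γ) : ℝ):ℂ) * (((q^γ : ℝ):ℂ) * ((q^γ : ℝ):ℂ)) = 1 := by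
    have h' := congrArg (fun r : ℝ => (r:ℂ)) hA2r
    push_cast at h'
    linear_combination h'
  have hA21r : q^(-2*γ-1) * (q^γ * q^γ * q) = 1 := by
    have h1 : q^(-2*γ-1) * (q^γ * q^γ) = q^(-1:ℝ) := by
      rw [← Real.rpow_add q0, ← Real.rpow_add q0]
      rw [show -2*γ - 1 + (γ + γ) = (-1:ℝ) by ring]
    calc q^(-2*γ-1) * (q^γ * q^γ * q) = q^(-2*γ-1) * (q^γ * q^γ) * q := by ring
    _ = q^(-1:ℝ) * q := by rw [h1]
    _ = 1 := by rw [Real.rpow_neg_one]; exact inv_mul_cancel₀ hqne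
  have hA21 : ((q^(-2*γ-1) : ℝ):ℂ) * (((q^γ : ℝ):ℂ) * ((q^γ : ℝ):ℂ) * (q:ℂ)) = 1 := by
    have h' := congrArg (fun r : ℝ => (r:ℂ)) hA21r
    push_cast at h'
    linear_combination h'
  have hNrr : Complex.normSq α * (q*q - 1) = q*q := by
    have h1 : q - q⁻¹ ≠ 0 := ne_of_gt hLr0
    rw [← Complex.sq_norm, hα, div_mul_eq_mul_div, div_eq_iff h1]
    field_simp
  have hNr : ((Complex.normSq α : ℝ):ℂ) * ((q:ℂ)*(q:ℂ) - 1) = (q:ℂ)*(q:ℂ) := by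
    have h' := congrArg (fun r : ℝ => (r:ℂ)) hNrr
    push_cast at h'
    linear_combination h'
  have hN0 : ((Complex.normSq α : ℝ):ℂ) ≠ 0 := by
    have hpos : (0:ℝ) < Complex.normSq α := by
      rw [← Complex.sq_norm, hα]
      positivity
    exact_mod_cast ne_of_gt hpos
  have hQQ1 : (q:ℂ)*(q:ℂ) - 1 ≠ 0 := by
    have : ((q*q - 1 : ℝ):ℂ) ≠ 0 := by
      have : (0:ℝ) < q*q - 1 := by nlinarith
      exact_mod_cast ne_of_gt this
    convert this using 1
    push_cast
    ring
  have hE5 : E * ((q:ℂ)*(q:ℂ) - 1) = (1 + ε) * ((q:ℂ)*(q:ℂ)) := by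
    rw [hE]
    have hz : ((q:ℂ))^(-2:ℤ) = ((q:ℂ)*(q:ℂ))⁻¹ := by
      rw [zpow_neg]
      congr 1
      rw [show ((2:ℤ)) = ((2:ℕ):ℤ) from rfl, zpow_natCast]
      ring
    rw [hz]
    have hd : (1:ℂ) - ((q:ℂ)*(q:ℂ))⁻¹ ≠ 0 := by
      intro hcon
      apply hQQ1
      have h2 : ((q:ℂ)*(q:ℂ)) * (1 - ((q:ℂ)*(q:ℂ))⁻¹) = (q:ℂ)*(q:ℂ) - 1 := by
        field_simp
      rw [hcon, mul_zero] at h2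
      exact h2.symm
    rw [div_mul_eq_mul_div, div_eq_iff hd]
    linear_combination (1+ε) * mul_inv_cancel₀ (mul_ne_zero hQc0 hQc0)
  have hαβ : α * (starRingEnd ℂ) β = ((Complex.normSq α : ℝ):ℂ) * ((q^γ : ℝ):ℂ) := by
    rw [hβ, map_mul, Complex.conj_ofReal]
    linear_combination ((q^γ : ℝ):ℂ) * Complex.mul_conj α
  have hnβ : ((Complex.normSq β : ℝ):ℂ) = ((Complex.normSq α : ℝ):ℂ) * (((q^γ : ℝ):ℂ) * ((q^γ : ℝ):ℂ)) := by
    rw [hβ, Complex.normSq_mul, Complex.normSq_ofReal]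
    push_cast
    ring
  intro x hx
  have hw1 : ((1:ℂ) - Complex.I * ((-((q ^ (-γ) * (q - q⁻¹) * q ^ (-(1:ℝ)/2)) * (q^2*x)) : ℝ):ℂ)) = (1 + Complex.I * ((q ^ (-γ) * (q - q⁻¹) * q ^ (-(1:ℝ)/2) : ℝ):ℂ) * (q:ℂ)^2 * (x:ℂ)) := by
    push_cast
    ring
  have hwm1 : ((1:ℂ) - Complex.I * ((-((q ^ (-γ) * (q - q⁻¹) * q ^ (-(1:ℝ)/2)) * x) : ℝ):ℂ)) = (1 + Complex.I * ((q ^ (-γ) * (q - q⁻¹) * q ^ (-(1:ℝ)/2) : ℝ):ℂ) * (x:ℂ)) := by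
    push_cast
    ring
  have hw0 : (1 + Complex.I * ((q ^ (-γ) * (q - q⁻¹) * q ^ (-(1:ℝ)/2) : ℝ):ℂ) * (q:ℂ)^2 * (x:ℂ)) ≠ 0 := by
    have := one_sub_I_mul_ne (-((q ^ (-γ) * (q - q⁻¹) * q ^ (-(1:ℝ)/2)) * (q^2*x)))
    rwa [hw1] at this
  have hP0 : psi0 q γ x ≠ 0 := by
    rw [hpsi x]
    exact inv_ne_zero (qPoch_ne _ _ hpr)
  have hP2 : (1 + Complex.I * ((q ^ (-γ) * (q - q⁻¹) * q ^ (-(1:ℝ)/2) : ℝ):ℂ) * (q:ℂ)^2 * (x:ℂ)) * psi0 q γ (q^2*x) = psi0 q γ x := by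
    rw [hpsi (q^2*x), hpsi x]
    have hs := qPoch_shift (-((q ^ (-γ) * (q - q⁻¹) * q ^ (-(1:ℝ)/2)) * (q^2*x))) ((q^2)⁻¹) hpr
    rw [show -((q ^ (-γ) * (q - q⁻¹) * q ^ (-(1:ℝ)/2)) * (q^2*x)) * (q^2)⁻¹ = -((q ^ (-γ) * (q - q⁻¹) * q ^ (-(1:ℝ)/2)) * x) by field_simp] at hs
    rw [hs, mul_inv, hw1, ← mul_assoc, mul_inv_cancel₀ hw0, one_mul]
  have hPm : psi0 q γ (q⁻¹^2*x) = (1 + Complex.I * ((q ^ (-γ) * (q - q⁻¹) * q ^ (-(1:ℝ)/2) : ℝ):ℂ) * (x:ℂ)) * psi0 q γ x := by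
    rw [hpsi (q⁻¹^2*x), hpsi x]
    have hs := qPoch_shift (-((q ^ (-γ) * (q - q⁻¹) * q ^ (-(1:ℝ)/2)) * x)) ((q^2)⁻¹) hpr
    rw [show -((q ^ (-γ) * (q - q⁻¹) * q ^ (-(1:ℝ)/2)) * x) * (q^2)⁻¹ = -((q ^ (-γ) * (q - q⁻¹) * q ^ (-(1:ℝ)/2)) * (q⁻¹^2*x)) by rw [inv_pow]; ring] at hs
    rw [hs, mul_inv, hwm1]
    rw [show (1 + Complex.I * ((q ^ (-γ) * (q - q⁻¹) * q ^ (-(1:ℝ)/2) : ℝ):ℂ) * (x:ℂ)) * ((1 + Complex.I * ((q ^ (-γ) * (q - q⁻¹) * q ^ (-(1:ℝ)/2) : ℝ):ℂ) * (x:ℂ))⁻¹ * (qPochInf (Complex.I * ((-((q ^ (-γ) * (q - q⁻¹) * q ^ (-(1:ℝ)/2)) * (q⁻¹^2*x)) : ℝ):ℂ)) (((q^2)⁻¹ : ℝ):ℂ))⁻¹) = ((1 + Complex.I * ((q ^ (-γ) * (q - q⁻¹) * q ^ (-(1:ℝ)/2) : ℝ):ℂ) * (x:ℂ)) * (1 +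 Complex.I * ((q ^ (-γ) * (q - q⁻¹) * q ^ (-(1:ℝ)/2) : ℝ):ℂ) * (x:ℂ))⁻¹) * (qPochInf (Complex.I * ((-((q ^ (-γ) * (q - q⁻¹) * q ^ (-(1:ℝ)/2)) * (q⁻¹^2*x)) : ℝ):ℂ)) (((q^2)⁻¹ : ℝ):ℂ))⁻¹ by ring]
    have hwm0 : (1 + Complex.I * ((q ^ (-γ) * (q - q⁻¹) * q ^ (-(1:ℝ)/2) : ℝ):ℂ) * (x:ℂ)) ≠ 0 := by
      have := one_sub_I_mul_ne (-((q ^ (-γ) * (q - q⁻¹) * q ^ (-(1:ℝ)/2)) * x))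
      rwa [hwm1] at this
    rw [mul_inv_cancel₀ hwm0, one_mul]
  have hL1 : ((Complex.normSq α : ℝ):ℂ)*((q:ℂ)-(q:ℂ)⁻¹)^2*(x:ℂ)^2 + ((Complex.normSq α : ℝ):ℂ)*(((q^γ : ℝ):ℂ)*((q^γ : ℝ):ℂ))*((q:ℂ)+(q:ℂ)⁻¹) - E*((q:ℂ)-(q:ℂ)⁻¹)^2*(x:ℂ)^2
      = ((Complex.normSq α : ℝ):ℂ)*(((q^γ : ℝ):ℂ)*((q^γ : ℝ):ℂ))*((q:ℂ) + (q:ℂ)⁻¹ - ε*((q^(-2*γ) : ℝ):ℂ)*((q:ℂ)-(q:ℂ)⁻¹)^2*(x:ℂ)^2) := by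
    linear_combination ((q:ℂ)⁻¹*((q:ℂ)-(q:ℂ)⁻¹)*(x:ℂ)^2*(1+ε))*hNr - ((q:ℂ)⁻¹*((q:ℂ)-(q:ℂ)⁻¹)*(x:ℂ)^2)*hE5
      - ((((Complex.normSq α : ℝ):ℂ) - E + ((Complex.normSq α : ℝ):ℂ)*ε)*((q:ℂ)-(q:ℂ)⁻¹)*(x:ℂ)^2*(q:ℂ))*hQi + (ε*((Complex.normSq α : ℝ):ℂ)*((q:ℂ)-(q:ℂ)⁻¹)^2*(x:ℂ)^2)*hA2
  have hL2 : -(q:ℂ)⁻¹*(((Complex.normSq α : ℝ):ℂ)*(((q^γ : ℝ):ℂ)*((q^γ : ℝ):ℂ))) - Complex.I*(((Complex.normSq α : ℝ):ℂ)*((q^γ : ℝ):ℂ))*((q^((1:ℝ)/2) : ℝ):ℂ)*(x:ℂ)*((q:ℂ)-(q:ℂ)⁻¹)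
      = -(((Complex.normSq α : ℝ):ℂ)*(((q^γ : ℝ):ℂ)*((q^γ : ℝ):ℂ))*(q:ℂ)⁻¹) * (1 + Complex.I * ((q ^ (-γ) * (q - q⁻¹) * q ^ (-(1:ℝ)/2) : ℝ):ℂ) * (q:ℂ)^2 * (x:ℂ)) := by
    linear_combination (Complex.I*((Complex.normSq α : ℝ):ℂ)*((q^γ : ℝ):ℂ)*(x:ℂ)*((q^((1:ℝ)/2) : ℝ):ℂ))*hC - (Complex.I*((Complex.normSq α : ℝ):ℂ)*((q^γ : ℝ):ℂ)*(x:ℂ)*((q ^ (-γ) * (q - q⁻¹) * q ^ (-(1:ℝ)/2) : ℝ):ℂ)*((q^γ : ℝ):ℂ))*hV2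
      + (Complex.I*((Complex.normSq α : ℝ):ℂ)*((q^γ : ℝ):ℂ)*(x:ℂ)*((q ^ (-γ) * (q - q⁻¹) * q ^ (-(1:ℝ)/2) : ℝ):ℂ)*((q^γ : ℝ):ℂ)*(q:ℂ))*hQi
  have hL3 : (1 + Complex.I * ((q ^ (-γ) * (q - q⁻¹) * q ^ (-(1:ℝ)/2) : ℝ):ℂ) * (x:ℂ)) * (-(q:ℂ)*(((Complex.normSq α : ℝ):ℂ)*(((q^γ : ℝ):ℂ)*((q^γ : ℝ):ℂ))) + Complex.I*(((Complex.normSq α : ℝ):ℂ)*((q^γ : ℝ):ℂ))*((q^((1:ℝ)/2) : ℝ):ℂ)*(x:ℂ)*((q:ℂ)-(q:ℂ)⁻¹))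
      = -(((Complex.normSq α : ℝ):ℂ)*(((q^γ : ℝ):ℂ)*((q^γ : ℝ):ℂ)))*(q:ℂ)*(1 + ((q^(-2*γ-1) : ℝ):ℂ)*((q:ℂ)-(q:ℂ)⁻¹)^2*(x:ℂ)^2) := by
    linear_combination (-(Complex.I*((Complex.normSq α : ℝ):ℂ)*((q^γ : ℝ):ℂ)*(x:ℂ)*((q^((1:ℝ)/2) : ℝ):ℂ)) - (((Complex.normSq α : ℝ):ℂ)*((q^γ : ℝ):ℂ)*((q:ℂ)-(q:ℂ)⁻¹)*(x:ℂ)^2*((q^(-2*γ-1) : ℝ):ℂ)*((q^γ : ℝ):ℂ)*(q:ℂ)))*hC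
      + (Complex.I*((Complex.normSq α : ℝ):ℂ)*((q^γ : ℝ):ℂ)*(x:ℂ)*((q ^ (-γ) * (q - q⁻¹) * q ^ (-(1:ℝ)/2) : ℝ):ℂ)*((q^γ : ℝ):ℂ))*hV2
      + (((q ^ (-γ) * (q - q⁻¹) * q ^ (-(1:ℝ)/2) : ℝ):ℂ)*((Complex.normSq α : ℝ):ℂ)*((q^γ : ℝ):ℂ)*((q^((1:ℝ)/2) : ℝ):ℂ)*((q:ℂ)-(q:ℂ)⁻¹)*(x:ℂ)^2)*Complex.I_mul_I
      + (((Complex.normSq α : ℝ):ℂ)*((q^γ : ℝ):ℂ)*((q:ℂ)-(q:ℂ)⁻¹)*(x:ℂ)^2*((q ^ (-γ) * (q - q⁻¹) * q ^ (-(1:ℝ)/2) : ℝ):ℂ)*((q^((1:ℝ)/2) : ℝ):ℂ))*hA21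
  rw [hf x, hf (q^2*x), hf (q⁻¹^2*x), hLcast]
  constructor
  · intro h
    have key : psi0 q γ x * (((Complex.normSq α : ℝ):ℂ) * (((q^γ : ℝ):ℂ) * (((q^γ : ℝ):ℂ) * ((1 + Complex.I * ((q ^ (-γ) * (q - q⁻¹) * q ^ (-(1:ℝ)/2) : ℝ):ℂ) * (q:ℂ)^2 * (x:ℂ)) * (g x * ((q:ℂ) + (q:ℂ)⁻¹ - ε * ((q ^ (-2 * γ) : ℝ) : ℂ) * ((q:ℂ) - (q:ℂ)⁻¹) ^ 2 * (x:ℂ) ^ 2) - (q:ℂ)⁻¹ * g (q ^ 2 * x) - (q:ℂ) * g (q⁻¹ ^ 2 * x) * (1 + ((q ^ (-2 * γ - 1) : ℝ) : ℂ) * ((q:ℂ) - (q:ℂ)⁻¹) ^ 2 * (x:ℂ) ^ 2)))))) = 0 := by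
      linear_combination ((-1:ℂ) + (-1:ℂ)*(q:ℂ)^2*(x:ℂ)*((q ^ (-γ) * (q - q⁻¹) * q ^ (-(1:ℝ)/2) : ℝ):ℂ)*Complex.I)*h + ((1:ℂ)*(q:ℂ)⁻¹*(g (q^2*x))*((Complex.normSq β : ℝ):ℂ) + (-1:ℂ)*(q:ℂ)⁻¹*((q^((1:ℝ)/2) : ℝ):ℂ)*(x:ℂ)*Complex.I*(g (q^2*x))*(α * (starRingEnd ℂ) β) + (1:ℂ)*(q:ℂ)*((q^((1:ℝ)/2) : ℝ):ℂ)*(x:ℂ)*Complex.I*(g (q^2*x))*(α * (starRingEnd ℂ) β))*hP2 + ((1:ℂ)*(q:ℂ)⁻¹*((q^((1:ℝ)/2) : ℝ):ℂ)*(x:ℂ)*Complex.I*(g (q⁻¹^2*x))*(α * (starRingEnd ℂ) β) + (1:ℂ)*(q:ℂ)*(g (q⁻¹^2*x))*((Complex.normSq β : ℝ):ℂ) + (-1:ℂ)*(q:ℂ)*((q^((1:ℝ)/2) : ℝ):ℂ)*(x:ℂ)*Complex.I*(g (q⁻¹^2*x))*(α * (starRingEnd ℂ) β) + (1:ℂ)*(q:ℂ)^2*(q:ℂ)⁻¹*((q^((1:ℝ)/2)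 : ℝ):ℂ)*(x:ℂ)^2*((q ^ (-γ) * (q - q⁻¹) * q ^ (-(1:ℝ)/2) : ℝ):ℂ)*Complex.I^2*(g (q⁻¹^2*x))*(α * (starRingEnd ℂ) β) + (1:ℂ)*(q:ℂ)^3*(x:ℂ)*((q ^ (-γ) * (q - q⁻¹) * q ^ (-(1:ℝ)/2) : ℝ):ℂ)*Complex.I*(g (q⁻¹^2*x))*((Complex.normSq β : ℝ):ℂ) + (-1:ℂ)*(q:ℂ)^3*((q^((1:ℝ)/2) : ℝ):ℂ)*(x:ℂ)^2*((q ^ (-γ) * (q - q⁻¹) * q ^ (-(1:ℝ)/2) : ℝ):ℂ)*Complex.I^2*(g (q⁻¹^2*x))*(α * (starRingEnd ℂ) β))*hPm + ((1:ℂ)*(q:ℂ)⁻¹*(psi0 q γ x)*(g (q^2*x)) + (-1:ℂ)*(q:ℂ)⁻¹*(psi0 q γ x)*(g x) + (1:ℂ)*(q:ℂ)*(psi0 q γ x)*(g (q⁻¹^2*x)) + (-1:ℂ)*(q:ℂ)*(psi0 q γ x)*(g x) + (1:ℂ)*(q:ℂ)*(x:ℂ)*((q ^ (-γ) * (q - q⁻¹)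 * q ^ (-(1:ℝ)/2) : ℝ):ℂ)*Complex.I*(psi0 q γ x)*(g (q⁻¹^2*x)) + (-1:ℂ)*(q:ℂ)^2*(q:ℂ)⁻¹*(x:ℂ)*((q ^ (-γ) * (q - q⁻¹) * q ^ (-(1:ℝ)/2) : ℝ):ℂ)*Complex.I*(psi0 q γ x)*(g x) + (1:ℂ)*(q:ℂ)^3*(x:ℂ)*((q ^ (-γ) * (q - q⁻¹) * q ^ (-(1:ℝ)/2) : ℝ):ℂ)*Complex.I*(psi0 q γ x)*(g (q⁻¹^2*x)) + (-1:ℂ)*(q:ℂ)^3*(x:ℂ)*((q ^ (-γ) * (q - q⁻¹) * q ^ (-(1:ℝ)/2) : ℝ):ℂ)*Complex.I*(psi0 q γ x)*(g x) + (1:ℂ)*(q:ℂ)^3*(x:ℂ)^2*((q ^ (-γ) * (q - q⁻¹) * q ^ (-(1:ℝ)/2) : ℝ):ℂ)^2*Complex.I^2*(psi0 q γ x)*(g (q⁻¹^2*x)))*hnβ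
        + ((1:ℂ)*(q:ℂ)⁻¹*((q^((1:ℝ)/2) : ℝ):ℂ)*(x:ℂ)*Complex.I*(psi0 q γ x)*(g (q⁻¹^2*x)) + (-1:ℂ)*(q:ℂ)⁻¹*((q^((1:ℝ)/2) : ℝ):ℂ)*(x:ℂ)*Complex.I*(psi0 q γ x)*(g (q^2*x)) + (1:ℂ)*(q:ℂ)⁻¹*((q^((1:ℝ)/2) : ℝ):ℂ)*(x:ℂ)^2*((q ^ (-γ) * (q - q⁻¹) * q ^ (-(1:ℝ)/2) : ℝ):ℂ)*Complex.I^2*(psi0 q γ x)*(g (q⁻¹^2*x)) + (-1:ℂ)*(q:ℂ)*((q^((1:ℝ)/2) : ℝ):ℂ)*(x:ℂ)*Complex.I*(psi0 q γ x)*(g (q⁻¹^2*x)) + (1:ℂ)*(q:ℂ)*((q^((1:ℝ)/2) : ℝ):ℂ)*(x:ℂ)*Complex.I*(psi0 q γ x)*(g (q^2*x)) + (-1:ℂ)*(q:ℂ)*((q^((1:ℝ)/2) : ℝ):ℂ)*(x:ℂ)^2*((q ^ (-γ) * (q - q⁻¹) * q ^ (-(1:ℝ)/2) : ℝ):ℂ)*Complex.I^2*(psi0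 q γ x)*(g (q⁻¹^2*x)) + (1:ℂ)*(q:ℂ)^2*(q:ℂ)⁻¹*((q^((1:ℝ)/2) : ℝ):ℂ)*(x:ℂ)^2*((q ^ (-γ) * (q - q⁻¹) * q ^ (-(1:ℝ)/2) : ℝ):ℂ)*Complex.I^2*(psi0 q γ x)*(g (q⁻¹^2*x)) + (1:ℂ)*(q:ℂ)^2*(q:ℂ)⁻¹*((q^((1:ℝ)/2) : ℝ):ℂ)*(x:ℂ)^3*((q ^ (-γ) * (q - q⁻¹) * q ^ (-(1:ℝ)/2) : ℝ):ℂ)^2*Complex.I^3*(psi0 q γ x)*(g (q⁻¹^2*x)) + (-1:ℂ)*(q:ℂ)^3*((q^((1:ℝ)/2) : ℝ):ℂ)*(x:ℂ)^2*((q ^ (-γ) * (q - q⁻¹) * q ^ (-(1:ℝ)/2) : ℝ):ℂ)*Complex.I^2*(psi0 q γ x)*(g (q⁻¹^2*x)) + (-1:ℂ)*(q:ℂ)^3*((q^((1:ℝ)/2) : ℝ):ℂ)*(x:ℂ)^3*((q ^ (-γ) * (q - q⁻¹) * q ^ (-(1:ℝ)/2) : ℝ):ℂ)^2*Complex.I^3*(psi0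 q γ x)*(g (q⁻¹^2*x)))*hαβ + ((-1:ℂ)*(psi0 q γ x)*(g x) + (-1:ℂ)*(q:ℂ)^2*(x:ℂ)*((q ^ (-γ) * (q - q⁻¹) * q ^ (-(1:ℝ)/2) : ℝ):ℂ)*Complex.I*(psi0 q γ x)*(g x))*hL1 + ((-1:ℂ)*(psi0 q γ x)*(g (q^2*x)))*hL2 + ((-1:ℂ)*(psi0 q γ x)*(g (q⁻¹^2*x)) + (-1:ℂ)*(q:ℂ)^2*(x:ℂ)*((q ^ (-γ) * (q - q⁻¹) * q ^ (-(1:ℝ)/2) : ℝ):ℂ)*Complex.I*(psi0 q γ x)*(g (q⁻¹^2*x)))*hL3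
    have k1 := (mul_eq_zero.mp key).resolve_left hP0
    have k2 := (mul_eq_zero.mp k1).resolve_left hN0
    have k3 := (mul_eq_zero.mp k2).resolve_left hU0
    have k4 := (mul_eq_zero.mp k3).resolve_left hU0
    have k5 := (mul_eq_zero.mp k4).resolve_left hw0
    exact k5.symm
  · intro h
    apply mul_left_cancel₀ hw0
    linear_combination ((1:ℂ)*((q^γ : ℝ):ℂ)^2*((Complex.normSq α : ℝ):ℂ)*(psi0 q γ x) + (1:ℂ)*(q:ℂ)^2*((q^γ : ℝ):ℂ)^2*(x:ℂ)*((q ^ (-γ) * (q - q⁻¹) * q ^ (-(1:ℝ)/2) : ℝ):ℂ)*((Complex.normSq α : ℝ):ℂ)*Complex.I*(psi0 q γ x))*h + ((1:ℂ)*(q:ℂ)⁻¹*(g (q^2*x))*((Complex.normSq β : ℝ):ℂ) + (-1:ℂ)*(q:ℂ)⁻¹*((q^((1:ℝ)/2) : ℝ):ℂ)*(x:ℂ)*Complex.I*(g (q^2*x))*(α * (starRingEnd ℂ) β) + (1:ℂ)*(q:ℂ)*((q^((1:ℝ)/2) : ℝ):ℂ)*(x:ℂ)*Complex.I*(g (q^2*x))*(α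 * (starRingEnd ℂ) β))*hP2 + ((1:ℂ)*(q:ℂ)⁻¹*((q^((1:ℝ)/2) : ℝ):ℂ)*(x:ℂ)*Complex.I*(g (q⁻¹^2*x))*(α * (starRingEnd ℂ) β) + (1:ℂ)*(q:ℂ)*(g (q⁻¹^2*x))*((Complex.normSq β : ℝ):ℂ) + (-1:ℂ)*(q:ℂ)*((q^((1:ℝ)/2) : ℝ):ℂ)*(x:ℂ)*Complex.I*(g (q⁻¹^2*x))*(α * (starRingEnd ℂ) β) + (1:ℂ)*(q:ℂ)^2*(q:ℂ)⁻¹*((q^((1:ℝ)/2) : ℝ):ℂ)*(x:ℂ)^2*((q ^ (-γ) * (q - q⁻¹) * q ^ (-(1:ℝ)/2) : ℝ):ℂ)*Complex.I^2*(g (q⁻¹^2*x))*(α * (starRingEnd ℂ) β) + (1:ℂ)*(q:ℂ)^3*(x:ℂ)*((q ^ (-γ) * (q - q⁻¹) * q ^ (-(1:ℝ)/2) : ℝ):ℂ)*Complex.I*(g (q⁻¹^2*x))*((Complex.normSq β : ℝ):ℂ) + (-1:ℂ)*(q:ℂ)^3*((q^((1:ℝ)/2) : ℝ):ℂ)*(x:ℂ)^2*((q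 ^ (-γ) * (q - q⁻¹) * q ^ (-(1:ℝ)/2) : ℝ):ℂ)*Complex.I^2*(g (q⁻¹^2*x))*(α * (starRingEnd ℂ) β))*hPm + ((1:ℂ)*(q:ℂ)⁻¹*(psi0 q γ x)*(g (q^2*x)) + (-1:ℂ)*(q:ℂ)⁻¹*(psi0 q γ x)*(g x) + (1:ℂ)*(q:ℂ)*(psi0 q γ x)*(g (q⁻¹^2*x)) + (-1:ℂ)*(q:ℂ)*(psi0 q γ x)*(g x) + (1:ℂ)*(q:ℂ)*(x:ℂ)*((q ^ (-γ) * (q - q⁻¹) * q ^ (-(1:ℝ)/2) : ℝ):ℂ)*Complex.I*(psi0 q γ x)*(g (q⁻¹^2*x)) + (-1:ℂ)*(q:ℂ)^2*(q:ℂ)⁻¹*(x:ℂ)*((q ^ (-γ) * (q - q⁻¹) * q ^ (-(1:ℝ)/2) : ℝ):ℂ)*Complex.I*(psi0 q γ x)*(g x) + (1:ℂ)*(q:ℂ)^3*(x:ℂ)*((q ^ (-γ) * (q - q⁻¹) * q ^ (-(1:ℝ)/2) : ℝ):ℂ)*Complex.I*(psi0 q γ x)*(g (q⁻¹^2*x))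 + (-1:ℂ)*(q:ℂ)^3*(x:ℂ)*((q ^ (-γ) * (q - q⁻¹) * q ^ (-(1:ℝ)/2) : ℝ):ℂ)*Complex.I*(psi0 q γ x)*(g x) + (1:ℂ)*(q:ℂ)^3*(x:ℂ)^2*((q ^ (-γ) * (q - q⁻¹) * q ^ (-(1:ℝ)/2) : ℝ):ℂ)^2*Complex.I^2*(psi0 q γ x)*(g (q⁻¹^2*x)))*hnβ
      + ((1:ℂ)*(q:ℂ)⁻¹*((q^((1:ℝ)/2) : ℝ):ℂ)*(x:ℂ)*Complex.I*(psi0 q γ x)*(g (q⁻¹^2*x)) + (-1:ℂ)*(q:ℂ)⁻¹*((q^((1:ℝ)/2) : ℝ):ℂ)*(x:ℂ)*Complex.I*(psi0 q γ x)*(g (q^2*x)) + (1:ℂ)*(q:ℂ)⁻¹*((q^((1:ℝ)/2) : ℝ):ℂ)*(x:ℂ)^2*((q ^ (-γ) * (q - q⁻¹) * q ^ (-(1:ℝ)/2) : ℝ):ℂ)*Complex.I^2*(psi0 q γ x)*(g (q⁻¹^2*x)) + (-1:ℂ)*(q:ℂ)*((q^((1:ℝ)/2) : ℝ):ℂ)*(x:ℂ)*Complex.I*(psi0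 q γ x)*(g (q⁻¹^2*x)) + (1:ℂ)*(q:ℂ)*((q^((1:ℝ)/2) : ℝ):ℂ)*(x:ℂ)*Complex.I*(psi0 q γ x)*(g (q^2*x)) + (-1:ℂ)*(q:ℂ)*((q^((1:ℝ)/2) : ℝ):ℂ)*(x:ℂ)^2*((q ^ (-γ) * (q - q⁻¹) * q ^ (-(1:ℝ)/2) : ℝ):ℂ)*Complex.I^2*(psi0 q γ x)*(g (q⁻¹^2*x)) + (1:ℂ)*(q:ℂ)^2*(q:ℂ)⁻¹*((q^((1:ℝ)/2) : ℝ):ℂ)*(x:ℂ)^2*((q ^ (-γ) * (q - q⁻¹) * q ^ (-(1:ℝ)/2) : ℝ):ℂ)*Complex.I^2*(psi0 q γ x)*(g (q⁻¹^2*x)) + (1:ℂ)*(q:ℂ)^2*(q:ℂ)⁻¹*((q^((1:ℝ)/2) : ℝ):ℂ)*(x:ℂ)^3*((q ^ (-γ) * (q - q⁻¹) * q ^ (-(1:ℝ)/2) : ℝ):ℂ)^2*Complex.I^3*(psi0 q γ x)*(g (q⁻¹^2*x)) + (-1:ℂ)*(q:ℂ)^3*((q^((1:ℝ)/2) : ℝ):ℂ)*(x:ℂ)^2*((q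 ^ (-γ) * (q - q⁻¹) * q ^ (-(1:ℝ)/2) : ℝ):ℂ)*Complex.I^2*(psi0 q γ x)*(g (q⁻¹^2*x)) + (-1:ℂ)*(q:ℂ)^3*((q^((1:ℝ)/2) : ℝ):ℂ)*(x:ℂ)^3*((q ^ (-γ) * (q - q⁻¹) * q ^ (-(1:ℝ)/2) : ℝ):ℂ)^2*Complex.I^3*(psi0 q γ x)*(g (q⁻¹^2*x)))*hαβ + ((-1:ℂ)*(psi0 q γ x)*(g x) + (-1:ℂ)*(q:ℂ)^2*(x:ℂ)*((q ^ (-γ) * (q - q⁻¹) * q ^ (-(1:ℝ)/2) : ℝ):ℂ)*Complex.I*(psi0 q γ x)*(g x))*hL1 + ((-1:ℂ)*(psi0 q γ x)*(g (q^2*x)))*hL2 + ((-1:ℂ)*(psi0 q γ x)*(g (q⁻¹^2*x)) + (-1:ℂ)*(q:ℂ)^2*(x:ℂ)*((q ^ (-γ) * (q - q⁻¹) * q ^ (-(1:ℝ)/2) : ℝ):ℂ)*Complex.I*(psi0 q γ x)*(g (q⁻¹^2*x)))*hL3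
end
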